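/- Let {v_k} be a sequence of nonnegative real numbers and {α_k}, {β_k} nonnegative real sequences with 0 ≤ α_k ≤ 1, v_{k+1} ≤ (1 − α_k) v_k + β_k for all k, ∑ α_k = ∞, ∑ β_k < ∞, and β_k/α_k → 0. Then v_k → 0. -/

import Mathlib

/-!
Subtracting the partial sums of `β` from `v` turns the recursion
`v (k + 1) ≤ v k - α k * v k + β k` into a nonincreasing sequence that is bounded below, because
`∑ β` converges. Hence `v` converges to some `L ≥ 0`, and telescoping shows that `∑ α k * v k`
converges. If `L > 0`, then eventually `α k ≤ (2 / L) * (α k * v k)`, so `∑ α` would converge.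
-/

open Filter Topology Finset

theorem sum_range_le_sub_of_le_sub {u w : ℕ → ℝ} (h : ∀ k, u (k + 1) ≤ u k - w k) (n : ℕ) :
    ∑ k ∈ range n, w k ≤ u 0 - u n := by
  induction n with
  | zero => simp
  | succ n ih =>
    rw [sum_range_succ]
    linarith [h n]

theorem neg_tsum_le_sub_sum_range {v β : ℕ → ℝ} (hv : ∀ k, 0 ≤ v k) (hβ : ∀ k, 0 ≤ β k)
    (hβsum : Summable β) (k : ℕ) : -∑' i, β i ≤ v k - ∑ i ∈ range k, β i := by
  linarith [hv k, hβsum.sum_le_tsum (range k) fun i _ => hβ i]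

section AlmostSupermartingale

variable {v w β : ℕ → ℝ} (hv : ∀ k, 0 ≤ v k) (hw : ∀ k, 0 ≤ w k) (hβ : ∀ k, 0 ≤ β k)
  (hβsum : Summable β) (hrec : ∀ k, v (k + 1) ≤ v k - w k + β k)
include hrec

theorem sub_sum_range_succ_le_of_le_sub_add (k : ℕ) :
    v (k + 1) - ∑ i ∈ range (k + 1), β i ≤ v k - ∑ i ∈ range k, β i - w k := by
  rw [sum_range_succ]
  linarith [hrec k]

include hv hw hβ hβsum

theorem exists_tendsto_of_le_sub_add : ∃ L, Tendsto v atTop (𝓝 L) := by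
  set u : ℕ → ℝ := fun k => v k - ∑ i ∈ range k, β i
  have hanti : Antitone u := antitone_nat_of_succ_le fun k =>
    (sub_sum_range_succ_le_of_le_sub_add hrec k).trans (by linarith [hw k])
  have hbdd : BddBelow (Set.range u) :=
    ⟨_, Set.forall_mem_range.2 (neg_tsum_le_sub_sum_range hv hβ hβsum)⟩
  refine ⟨(⨅ k, u k) + ∑' i, β i, ?_⟩
  simpa [u] using (tendsto_atTop_ciInf hanti hbdd).add hβsum.hasSum.tendsto_sum_nat

theorem summable_of_le_sub_add : Summable w :=
  summable_of_sum_range_le (c := v 0 + ∑' i, β i) hw fun n => by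
    have htel := sum_range_le_sub_of_le_sub (u := fun k => v k - ∑ i ∈ range k, β i)
      (sub_sum_range_succ_le_of_le_sub_add hrec) n
    rw [sum_range_zero] at htel
    linarith [neg_tsum_le_sub_sum_range hv hβ hβsum n]

end AlmostSupermartingale

theorem summable_of_summable_mul_of_tendsto {α v : ℕ → ℝ} {L : ℝ} (hα : ∀ k, 0 ≤ α k)
    (hαv : Summable fun k => α k * v k) (hv : Tendsto v atTop (𝓝 L)) (hL : 0 < L) :
    Summable α := by
  refine (hαv.mul_left (2 / L)).of_norm_bounded_eventually_nat ?_
  filter_upwards [hv.eventually (eventually_ge_nhds (half_lt_self hL))] with k hk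
  calc ‖α k‖ = 2 / L * (α k * (L / 2)) := by
        rw [Real.norm_of_nonneg (hα k)]; field_simp
    _ ≤ 2 / L * (α k * v k) := by gcongr; exact hα k

theorem stmt7_general (v α β : ℕ → ℝ)
    (hv : ∀ k, 0 ≤ v k)
    (hα0 : ∀ k, 0 ≤ α k) (hβ : ∀ k, 0 ≤ β k)
    (hrec : ∀ k, v (k + 1) ≤ (1 - α k) * v k + β k)
    (hαdiv : ¬ Summable α)
    (hβsum : Summable β) :
    Tendsto v atTop (nhds 0) := by
  have hrec' : ∀ k, v (k + 1) ≤ v k - α k * v k + β k := fun k =>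
    (hrec k).trans_eq (by ring)
  have hαv : ∀ k, 0 ≤ α k * v k := fun k => mul_nonneg (hα0 k) (hv k)
  obtain ⟨L, hL⟩ := exists_tendsto_of_le_sub_add hv hαv hβ hβsum hrec'
  obtain rfl : L = 0 := by
    refine ((ge_of_tendsto' hL hv).lt_or_eq.resolve_left fun hpos => hαdiv ?_).symm
    exact summable_of_summable_mul_of_tendsto hα0
      (summable_of_le_sub_add hv hαv hβ hβsum hrec') hL hpos
  exact hL

/-- Polyak's lemma, deterministic version: If `v_k ≥ 0`,
`0 ≤ α_k ≤ 1`, `β_k ≥ 0`, `v_{k+1} ≤ (1 − α_k) v_k + β_k`, `∑ α_k = ∞`,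
`∑ β_k < ∞`, and `β_k/α_k → 0`, then `v_k → 0`. -/
theorem stmt7 (v α β : ℕ → ℝ)
    (hv : ∀ k, 0 ≤ v k)
    (hα0 : ∀ k, 0 ≤ α k) (hα1 : ∀ k, α k ≤ 1) (hβ : ∀ k, 0 ≤ β k)
    (hrec : ∀ k, v (k + 1) ≤ (1 - α k) * v k + β k)
    (hαdiv : ¬ Summable α)
    (hβsum : Summable β)
    (hratio : Tendsto (fun k => β k / α k) atTop (nhds 0)) :
    Tendsto v atTop (nhds 0) :=
  stmt7_general v α β hv hα0 hβ hrec hαdiv hβsum
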